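/- Let Z be a closed unital sublattice of L_p[0,1], 1 ≤ p < ∞. Then Σ_Z := {A measurable : 1_A ∈ Z} is a σ-subalgebra of the Borel σ-algebra, Σ_Z equals the smallest σ-algebra making all functions in Z measurable, and Z = L_p([0,1], Σ_Z), the subspace of Σ_Z-measurable functions in L_p. -/

import Mathlib

open MeasureTheory
open scoped ENNReal

/-- The family of measurable sets whose (unit-constant) indicator function belongs
to `Z ⊆ L_p[0,1]`. -/
def sigmaOf (p : ℝ≥0∞) (Z : Submodule ℝ (Lp ℝ p (volume : Measure unitInterval))) :
    Set (Set unitInterval) :=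
  {A : Set unitInterval | ∃ (hA : MeasurableSet A)
    (hfA : (volume : Measure unitInterval) A ≠ ⊤),
    indicatorConstLp p hA hfA (1:ℝ) ∈ Z}

/-- The σ-algebra generated by (representatives of) the functions in `Z`. -/
noncomputable def sigmaGen (p : ℝ≥0∞) [Fact (1 ≤ p)]
    (Z : Submodule ℝ (Lp ℝ p (volume : Measure unitInterval))) :
    MeasurableSpace unitInterval :=
  ⨆ f ∈ (Z : Set (Lp ℝ p (volume : Measure unitInterval))),
    MeasurableSpace.comap (f : unitInterval → ℝ) inferInstance

-- Auxiliary development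

open Filter Set
open scoped NNReal Topology symmDiff

section Aux
variable {p : ℝ≥0∞} [Fact (1 ≤ p)]

/-- Bounded (by 1) a.e. convergence implies Lp convergence (finite measure, p ≠ ∞). -/
lemma aux_tendsto_Lp {α : Type*} [MeasurableSpace α] {ν : Measure α} [IsFiniteMeasure ν]
    (hp_top : p ≠ ⊤) (F : ℕ → Lp ℝ p ν) (G : Lp ℝ p ν)
    (hb : ∀ n, ∀ᵐ x ∂ν, ‖F n x‖ ≤ 1)
    (hlim : ∀ᵐ x ∂ν, Tendsto (fun n => F n x) atTop (𝓝 (G x))) :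
    Tendsto F atTop (𝓝 G) := by
  rw [Lp.tendsto_Lp_iff_tendsto_eLpNorm']
  refine tendsto_Lp_finite_of_tendsto_ae Fact.out hp_top
    (fun n => Lp.aestronglyMeasurable (F n)) (Lp.memLp G) ?_ hlim
  refine unifIntegrable_of Fact.out hp_top (fun n => Lp.aestronglyMeasurable (F n))
    (fun ε hε => ⟨2, fun i => ?_⟩)
  have h0 : ({x | (2:ℝ≥0) ≤ ‖F i x‖₊}.indicator (⇑(F i)) : α → ℝ) =ᵐ[ν] 0 := by
    filter_upwards [hb i] with x hx
    rw [Set.indicator_apply]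
    split_ifs with h
    · exfalso
      have h2 : (2:ℝ) ≤ ‖F i x‖ := h
      linarith
    · rfl
  rw [eLpNorm_congr_ae h0, eLpNorm_zero]
  exact zero_le

end Aux

section Main
variable {p : ℝ≥0∞} [Fact (1 ≤ p)]
  {Z : Submodule ℝ (Lp ℝ p (volume : Measure unitInterval))}

local notation "μ" => (volume : Measure unitInterval)

omit [Fact (1 ≤ p)] in
lemma ind_coe {A : Set unitInterval} (hA : MeasurableSet A) (hf : μ A ≠ ⊤) (c : ℝ) :
    ⇑(indicatorConstLp p hA hf c) =ᵐ[μ] A.indicator (fun _ => c) :=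
  indicatorConstLp_coeFn

omit [Fact (1 ≤ p)] in
lemma sigmaOf_nullInv {A B : Set unitInterval} (hA : A ∈ sigmaOf p Z)
    (hBm : MeasurableSet B) (hBf : μ B ≠ ⊤) (h : μ (A ∆ B) = 0) : B ∈ sigmaOf p Z := by
  obtain ⟨hAm, hAf, hmem⟩ := hA
  refine ⟨hBm, hBf, ?_⟩
  have heq : indicatorConstLp p hBm hBf (1:ℝ) = indicatorConstLp p hAm hAf 1 :=
    (indicatorConstLp_inj hBm hBf hAm hAf one_ne_zero).2
      (measure_symmDiff_eq_zero_iff.1 (by rwa [symmDiff_comm]))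
  rw [heq]; exact hmem

lemma sigmaOf_compl (huniv : μ Set.univ ≠ ⊤)
    (hone : indicatorConstLp p MeasurableSet.univ huniv (1:ℝ) ∈ Z)
    {A : Set unitInterval} (hA : A ∈ sigmaOf p Z) : Aᶜ ∈ sigmaOf p Z := by
  haveI : IsFiniteMeasure μ := ⟨huniv.lt_top⟩
  obtain ⟨hAm, hAf, hmem⟩ := hA
  refine ⟨hAm.compl, measure_ne_top _ _, ?_⟩
  have heq : indicatorConstLp p hAm.compl (measure_ne_top _ _) (1:ℝ)
      = indicatorConstLp p MeasurableSet.univ huniv 1 - indicatorConstLp p hAm hAf 1 := by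
    apply Lp.ext
    filter_upwards [ind_coe (p := p) hAm.compl (measure_ne_top _ _) 1,
      Lp.coeFn_sub (indicatorConstLp p MeasurableSet.univ huniv (1:ℝ))
        (indicatorConstLp p hAm hAf 1),
      ind_coe (p := p) MeasurableSet.univ huniv 1, ind_coe (p := p) hAm hAf 1] with x h1 h2 h3 h4
    rw [h1, h2, Pi.sub_apply, h3, h4]
    by_cases hx : x ∈ A <;> simp [hx]
  rw [heq]; exact sub_mem hone hmem

lemma sigmaOf_union (huniv : μ Set.univ ≠ ⊤)
    (hsup : ∀ f ∈ Z, ∀ g ∈ Z, f ⊔ g ∈ Z)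
    {A B : Set unitInterval} (hA : A ∈ sigmaOf p Z) (hB : B ∈ sigmaOf p Z) :
    A ∪ B ∈ sigmaOf p Z := by
  haveI : IsFiniteMeasure μ := ⟨huniv.lt_top⟩
  obtain ⟨hAm, hAf, hmemA⟩ := hA
  obtain ⟨hBm, hBf, hmemB⟩ := hB
  refine ⟨hAm.union hBm, measure_ne_top _ _, ?_⟩
  have heq : indicatorConstLp p (hAm.union hBm) (measure_ne_top _ _) (1:ℝ)
      = indicatorConstLp p hAm hAf 1 ⊔ indicatorConstLp p hBm hBf 1 := by
    apply Lp.ext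
    filter_upwards [ind_coe (p := p) (hAm.union hBm) (measure_ne_top _ _) 1,
      Lp.coeFn_sup (indicatorConstLp p hAm hAf (1:ℝ)) (indicatorConstLp p hBm hBf 1),
      ind_coe (p := p) hAm hAf 1, ind_coe (p := p) hBm hBf 1] with x h1 h2 h3 h4
    rw [h1, h2, Pi.sup_apply, h3, h4]
    by_cases hx : x ∈ A <;> by_cases hy : x ∈ B <;>
      simp [Set.indicator, hx, hy]
  rw [heq]; exact hsup _ hmemA _ hmemB

lemma sigmaOf_iUnion (hp_top : p ≠ ⊤) (huniv : μ Set.univ ≠ ⊤)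
    (hZc : IsClosed (Z : Set (Lp ℝ p μ)))
    (hsup : ∀ f ∈ Z, ∀ g ∈ Z, f ⊔ g ∈ Z)
    (B : ℕ → Set unitInterval) (hB : ∀ k, B k ∈ sigmaOf p Z) :
    (⋃ k, B k) ∈ sigmaOf p Z := by
  haveI : IsFiniteMeasure μ := ⟨huniv.lt_top⟩
  set C : ℕ → Set unitInterval := fun n => ⋃ k ∈ Finset.range (n+1), B k with hC
  have hCmem : ∀ n, C n ∈ sigmaOf p Z := by
    intro n; induction n with
    | zero => simpa [hC] using hB 0
    | succ n ih =>
        have : C (n+1) = C n ∪ B (n+1) := by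
          simp only [hC, Finset.range_add_one (n := n+1), Finset.set_biUnion_insert]
          rw [Set.union_comm]
        rw [this]
        exact sigmaOf_union huniv hsup ih (hB (n+1))
  have hCm : ∀ n, MeasurableSet (C n) := fun n => (hCmem n).choose
  have hCZ : ∀ n, indicatorConstLp p (hCm n) (measure_ne_top _ _) (1:ℝ) ∈ Z := fun n =>
    (hCmem n).choose_spec.choose_spec
  have hUm : MeasurableSet (⋃ k, B k) := MeasurableSet.iUnion fun k => (hB k).choose
  refine ⟨hUm, measure_ne_top μ _, ?_⟩
  set G := indicatorConstLp p hUm (measure_ne_top μ _) (1:ℝ) with hG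
  set F : ℕ → Lp ℝ p μ := fun n => indicatorConstLp p (hCm n) (measure_ne_top μ _) (1:ℝ) with hF
  have hcoe : ∀ᵐ x ∂μ, ∀ n, F n x = (C n).indicator (fun _ => (1:ℝ)) x :=
    ae_all_iff.2 fun n => ind_coe (p := p) (hCm n) (measure_ne_top μ _) 1
  have key : Tendsto F atTop (𝓝 G) := by
    refine aux_tendsto_Lp hp_top F G ?_ ?_
    · intro n
      filter_upwards [ind_coe (p := p) (hCm n) (measure_ne_top μ _) 1] with x hx
      rw [hx]
      by_cases hxC : x ∈ C n <;> simp [hxC]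
    · filter_upwards [hcoe, ind_coe (p := p) hUm (measure_ne_top μ _) 1] with x hx hGx
      rw [hGx]
      by_cases hxU : x ∈ ⋃ k, B k
      · obtain ⟨k, hk⟩ := Set.mem_iUnion.1 hxU
        rw [Set.indicator_of_mem hxU]
        refine tendsto_const_nhds.congr' ?_
        filter_upwards [eventually_ge_atTop k] with n hn
        have hxC : x ∈ C n := by
          simp only [hC, Set.mem_iUnion]
          exact ⟨k, Finset.mem_range.2 (Nat.lt_succ_of_le hn), hk⟩
        rw [hx n, Set.indicator_of_mem hxC]
      · have hxC : ∀ n, x ∉ C n := by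
          intro n hmem
          exact hxU (by
            simp only [hC, Set.mem_iUnion] at hmem
            obtain ⟨k, _, hk⟩ := hmem
            exact Set.mem_iUnion.2 ⟨k, hk⟩)
        rw [Set.indicator_of_notMem hxU]
        refine tendsto_const_nhds.congr fun n => ?_
        rw [hx n, Set.indicator_of_notMem (hxC n)]
  exact hZc.mem_of_tendsto key (Eventually.of_forall hCZ)

lemma sigmaOf_gt (hp_top : p ≠ ⊤) (huniv : μ Set.univ ≠ ⊤)
    (hZc : IsClosed (Z : Set (Lp ℝ p μ)))
    (hone : indicatorConstLp p MeasurableSet.univ huniv (1:ℝ) ∈ Z)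
    (hsup : ∀ f ∈ Z, ∀ g ∈ Z, f ⊔ g ∈ Z)
    (hinf : ∀ f ∈ Z, ∀ g ∈ Z, f ⊓ g ∈ Z)
    {f : Lp ℝ p μ} (hf : f ∈ Z) {c : ℝ} (hc : 0 < c) :
    {x | c < f x} ∈ sigmaOf p Z := by
  haveI : IsFiniteMeasure μ := ⟨huniv.lt_top⟩
  set one : Lp ℝ p μ := indicatorConstLp p MeasurableSet.univ huniv (1:ℝ) with hone_def
  have hone_coe : ⇑one =ᵐ[μ] fun _ => (1:ℝ) := by
    filter_upwards [ind_coe (p := p) MeasurableSet.univ huniv 1] with x hx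
    rw [Set.indicator_univ] at hx
    exact hx
  set u : Lp ℝ p μ := (f - c • one) ⊔ 0 with hu_def
  have huZ : u ∈ Z := hsup _ (sub_mem hf (Submodule.smul_mem _ _ hone)) _ (zero_mem Z)
  set F : ℕ → Lp ℝ p μ := fun n => ((n:ℝ) • u) ⊓ one with hF_def
  have hFZ : ∀ n, F n ∈ Z := fun n => hinf _ (Submodule.smul_mem _ _ huZ) _ hone
  have hu_coe : ∀ᵐ x ∂μ, u x = max (f x - c) 0 := by
    filter_upwards [Lp.coeFn_sup (f - c • one) (0 : Lp ℝ p μ),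
      Lp.coeFn_sub f (c • one), Lp.coeFn_smul c one, Lp.coeFn_zero ℝ p μ,
      hone_coe] with x h1 h2 h3 h4 h5
    rw [hu_def]
    calc ((f - c • one) ⊔ (0:Lp ℝ p μ)) x = max ((f - c • one) x) ((0:Lp ℝ p μ) x) := by
          rw [h1]; rfl
      _ = max (f x - c) 0 := by
          rw [h2, h4, Pi.sub_apply, h3, Pi.smul_apply, h5, smul_eq_mul, mul_one]
          rfl
  have hF_coe : ∀ᵐ x ∂μ, ∀ n, F n x = min ((n:ℝ) * max (f x - c) 0) 1 := by
    rw [ae_all_iff]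
    intro n
    filter_upwards [Lp.coeFn_inf ((n:ℝ) • u) one, Lp.coeFn_smul (n:ℝ) u,
      hu_coe, hone_coe] with x h1 h2 h3 h4
    calc F n x = min (((n:ℝ) • u) x) (one x) := by rw [hF_def]; rw [h1]; rfl
      _ = min ((n:ℝ) * max (f x - c) 0) 1 := by
          rw [h2, Pi.smul_apply, h3, h4, smul_eq_mul]
  have hAm : MeasurableSet {x | c < f x} :=
    measurableSet_lt measurable_const (Lp.stronglyMeasurable f).measurable
  refine ⟨hAm, measure_ne_top μ _, ?_⟩
  set G := indicatorConstLp p hAm (measure_ne_top μ _) (1:ℝ) with hG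
  have key : Tendsto F atTop (𝓝 G) := by
    refine aux_tendsto_Lp hp_top F G ?_ ?_
    · intro n
      filter_upwards [hF_coe] with x hx
      rw [hx n]
      have h0 : (0:ℝ) ≤ min ((n:ℝ) * max (f x - c) 0) 1 := by positivity
      rw [Real.norm_eq_abs, abs_of_nonneg h0]
      exact min_le_right _ _
    · filter_upwards [hF_coe, ind_coe (p := p) hAm (measure_ne_top μ _) 1] with x hx hGx
      rw [hGx]
      by_cases hfc : x ∈ {x | c < f x}
      · rw [Set.indicator_of_mem hfc]
        have hd : (0:ℝ) < f x - c := sub_pos.2 hfc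
        refine tendsto_const_nhds.congr' ?_
        have ht : Tendsto (fun n : ℕ => (n:ℝ) * (f x - c)) atTop atTop :=
          Tendsto.atTop_mul_const hd tendsto_natCast_atTop_atTop
        filter_upwards [ht.eventually_ge_atTop 1] with n hn
        rw [hx n, max_eq_left hd.le, min_eq_right hn]
      · have hle : f x - c ≤ 0 := sub_nonpos.2 (not_lt.1 hfc)
        rw [Set.indicator_of_notMem hfc]
        refine tendsto_const_nhds.congr fun n => ?_
        rw [hx n, max_eq_right hle, mul_zero]
        simp
  exact hZc.mem_of_tendsto key (Eventually.of_forall hFZ)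

variable (hp_top : p ≠ ⊤) (huniv : μ Set.univ ≠ ⊤)
    (hZc : IsClosed (Z : Set (Lp ℝ p μ)))
    (hone : indicatorConstLp p MeasurableSet.univ huniv (1:ℝ) ∈ Z)
    (hsup : ∀ f ∈ Z, ∀ g ∈ Z, f ⊔ g ∈ Z)
    (hinf : ∀ f ∈ Z, ∀ g ∈ Z, f ⊓ g ∈ Z)

include hp_top huniv hZc hone hsup hinf

lemma sigmaOf_pos {f : Lp ℝ p μ} (hf : f ∈ Z) : {x | 0 < f x} ∈ sigmaOf p Z := by
  have heq : {x | 0 < f x} = ⋃ n : ℕ, {x | 1/((n:ℝ)+1) < f x} := by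
    ext x
    simp only [Set.mem_setOf_eq, Set.mem_iUnion]
    constructor
    · exact fun h => exists_nat_one_div_lt h
    · rintro ⟨n, hn⟩
      exact lt_trans (by positivity) hn
  rw [heq]
  exact sigmaOf_iUnion hp_top huniv hZc hsup _
    (fun n => sigmaOf_gt hp_top huniv hZc hone hsup hinf hf (by positivity))

lemma sigmaOf_gt_all {f : Lp ℝ p μ} (hf : f ∈ Z) (c : ℝ) :
    {x | c < f x} ∈ sigmaOf p Z := by
  haveI : IsFiniteMeasure μ := ⟨huniv.lt_top⟩
  set one : Lp ℝ p μ := indicatorConstLp p MeasurableSet.univ huniv (1:ℝ) with hone_def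
  set f' : Lp ℝ p μ := f - c • one with hf'_def
  have hf'Z : f' ∈ Z := sub_mem hf (Submodule.smul_mem _ _ hone)
  have hB : {x | 0 < f' x} ∈ sigmaOf p Z := sigmaOf_pos hp_top huniv hZc hone hsup hinf hf'Z
  have hAm : MeasurableSet {x | c < f x} :=
    measurableSet_lt measurable_const (Lp.stronglyMeasurable f).measurable
  refine sigmaOf_nullInv hB hAm (measure_ne_top μ _) ?_
  have hae : ∀ᵐ x ∂μ, f' x = f x - c := by
    filter_upwards [Lp.coeFn_sub f (c • one), Lp.coeFn_smul c one,
      ind_coe (p := p) MeasurableSet.univ huniv 1] with x h1 h2 h3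
    rw [hf'_def, h1, Pi.sub_apply, h2, Pi.smul_apply, h3]
    simp
  have hnull : μ {x | ¬ f' x = f x - c} = 0 := ae_iff.mp hae
  refine measure_mono_null ?_ hnull
  intro x hx
  simp only [Set.mem_setOf_eq]
  intro heq
  rw [Set.mem_symmDiff] at hx
  have hiff : (0 < f' x) ↔ (c < f x) := by rw [heq]; constructor <;> intro <;> linarith
  rcases hx with ⟨h1, h2⟩ | ⟨h1, h2⟩
  · exact h2 (hiff.1 h1)
  · exact h2 (hiff.2 h1)

lemma sigmaOf_measurableSet_iff {A : Set unitInterval} :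
    MeasurableSet[MeasurableSpace.generateFrom (sigmaOf p Z)] A ↔ A ∈ sigmaOf p Z := by
  constructor
  · intro hA
    induction A, hA using MeasurableSpace.generateFrom_induction with
    | hC t ht _ => exact ht
    | empty =>
        have h1 : (Set.univ : Set unitInterval) ∈ sigmaOf p Z := ⟨MeasurableSet.univ, huniv, hone⟩
        have h2 := sigmaOf_compl huniv hone h1
        rwa [Set.compl_univ] at h2
    | compl t _ ht => exact sigmaOf_compl huniv hone ht
    | iUnion s _ hs => exact sigmaOf_iUnion hp_top huniv hZc hsup s hs
  · exact MeasurableSpace.measurableSet_generateFrom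

lemma measurable_of_memZ {f : Lp ℝ p μ} (hf : f ∈ Z) :
    Measurable[MeasurableSpace.generateFrom (sigmaOf p Z)] ⇑f := by
  refine measurable_of_Ioi fun c => ?_
  rw [sigmaOf_measurableSet_iff hp_top huniv hZc hone hsup hinf]
  exact sigmaOf_gt_all hp_top huniv hZc hone hsup hinf hf c

end Main

/-- For a closed unital sublattice `Z` of `L_p[0,1]`,
`Σ_Z = {A : 1_A ∈ Z}` is a σ-algebra, it coincides (modulo null sets) with the smallest
σ-algebra making all functions of `Z` measurable, and `Z` is exactly the set of
elements of `L_p` admitting a `Σ_Z`-measurable representative. -/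
theorem unital_sublattice_eq_Lp_of_sigma
    (p : ℝ≥0∞) [Fact (1 ≤ p)] (hp_top : p ≠ ⊤)
    (huniv : (volume : Measure unitInterval) Set.univ ≠ ⊤)
    (Z : Submodule ℝ (Lp ℝ p (volume : Measure unitInterval)))
    (hZc : IsClosed (Z : Set (Lp ℝ p (volume : Measure unitInterval))))
    (hone : indicatorConstLp p MeasurableSet.univ huniv (1:ℝ) ∈ Z)
    (hsup : ∀ f ∈ Z, ∀ g ∈ Z, f ⊔ g ∈ Z)
    (hinf : ∀ f ∈ Z, ∀ g ∈ Z, f ⊓ g ∈ Z) :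
    (Set.univ ∈ sigmaOf p Z) ∧
    (∀ A ∈ sigmaOf p Z, Aᶜ ∈ sigmaOf p Z) ∧
    (∀ B : ℕ → Set unitInterval, (∀ k, B k ∈ sigmaOf p Z) → (⋃ k, B k) ∈ sigmaOf p Z) ∧
    (∀ A : Set unitInterval, MeasurableSet A →
      (A ∈ sigmaOf p Z ↔ ∃ B : Set unitInterval, MeasurableSet[sigmaGen p Z] B ∧
        (volume : Measure unitInterval) (symmDiff A B) = 0)) ∧
    (∀ f : Lp ℝ p (volume : Measure unitInterval),
      f ∈ Z ↔ ∃ g : unitInterval → ℝ,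
        Measurable[MeasurableSpace.generateFrom (sigmaOf p Z)] g ∧
        (f : unitInterval → ℝ) =ᵐ[(volume : Measure unitInterval)] g) := by
  haveI : IsFiniteMeasure (volume : Measure unitInterval) := ⟨huniv.lt_top⟩
  have hGenLe : sigmaGen p Z ≤ MeasurableSpace.generateFrom (sigmaOf p Z) := by
    refine iSup_le fun f => iSup_le fun hf => ?_
    exact Measurable.comap_le (measurable_of_memZ hp_top huniv hZc hone hsup hinf hf)
  refine ⟨⟨MeasurableSet.univ, huniv, hone⟩,
    fun A hA => sigmaOf_compl huniv hone hA,
    fun B hB => sigmaOf_iUnion hp_top huniv hZc hsup B hB, ?_, ?_⟩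
  · intro A hAm
    constructor
    · rintro hA
      obtain ⟨hAm', hAf, hmem⟩ := hA
      set fA := indicatorConstLp p hAm' hAf (1:ℝ) with hfA_def
      refine ⟨⇑fA ⁻¹' (Set.Ioi (1/2 : ℝ)), ?_, ?_⟩
      · have hle : MeasurableSpace.comap (⇑fA) inferInstance ≤ sigmaGen p Z := by
          refine le_iSup₂ (f := fun (f : Lp ℝ p (volume : Measure unitInterval))
            (_ : f ∈ (Z : Set (Lp ℝ p (volume : Measure unitInterval)))) =>
              MeasurableSpace.comap (⇑f) inferInstance) fA hmem
        exact hle _ ⟨Set.Ioi (1/2 : ℝ), measurableSet_Ioi, rfl⟩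
      · have hnull : (volume : Measure unitInterval)
            {x | ¬ fA x = A.indicator (fun _ => (1:ℝ)) x} = 0 :=
          ae_iff.mp (ind_coe (p := p) hAm' hAf 1)
        refine measure_mono_null ?_ hnull
        intro x hx
        simp only [Set.mem_setOf_eq]
        intro heq
        rw [Set.mem_symmDiff] at hx
        rcases hx with ⟨h1, h2⟩ | ⟨h1, h2⟩
        · refine h2 ?_
          simp only [Set.mem_preimage, Set.mem_Ioi, heq, Set.indicator_of_mem h1]
          norm_num
        · simp only [Set.mem_preimage, Set.mem_Ioi, heq, Set.indicator_of_notMem h2] at h1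
          norm_num at h1
    · rintro ⟨B, hBgen, hnull⟩
      have hBs : B ∈ sigmaOf p Z := by
        rw [← sigmaOf_measurableSet_iff hp_top huniv hZc hone hsup hinf]
        exact hGenLe B hBgen
      exact sigmaOf_nullInv hBs hAm (measure_ne_top _ _)
        (by rwa [symmDiff_comm])
  · intro f
    constructor
    · intro hf
      exact ⟨⇑f, measurable_of_memZ hp_top huniv hZc hone hsup hinf hf,
        Filter.EventuallyEq.rfl⟩
    · rintro ⟨g, hgm, hfg⟩
      have hm : MeasurableSpace.generateFrom (sigmaOf p Z)
          ≤ (MeasureSpace.toMeasurableSpace : MeasurableSpace unitInterval) :=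
        MeasurableSpace.generateFrom_le fun t ht => ht.choose
      refine Lp.induction_stronglyMeasurable hm hp_top (fun h => h ∈ Z) ?_
        (fun f' g' hf' hg' _ _ _ hPf hPg => Submodule.add_mem _ hPf hPg)
        (IsClosed.preimage continuous_subtype_val hZc) f ⟨g, hgm.stronglyMeasurable, hfg⟩
      intro c s hs hμs
      rw [Lp.simpleFunc.coe_indicatorConst]
      have hsS : s ∈ sigmaOf p Z :=
        (sigmaOf_measurableSet_iff hp_top huniv hZc hone hsup hinf).1 hs
      obtain ⟨hsm, hsf, hmem⟩ := hsS
      have heq : indicatorConstLp p (hm s hs) hμs.ne c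
          = c • indicatorConstLp p hsm hsf (1:ℝ) := by
        apply Lp.ext
        filter_upwards [ind_coe (p := p) (hm s hs) hμs.ne c,
          Lp.coeFn_smul c (indicatorConstLp p hsm hsf (1:ℝ)),
          ind_coe (p := p) hsm hsf 1] with x h1 h2 h3
        rw [h1, h2, Pi.smul_apply, h3, smul_eq_mul]
        by_cases hx : x ∈ s <;> simp [hx]
      rw [heq]
      exact Submodule.smul_mem _ _ hmem
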